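/- Let G = (V, E) be a graph with V = {v_1,…,v_n}, E = {e_1,…,e_m}, let k be an integer, let ℓ = C(k,2) = k(k−1)/2, and assume m ≥ ℓ. Construct the fair-division instance on graph H: goods are ℓ popular goods q_1,…,q_ℓ, k specialized goods p_1,…,p_k, and ℓ+1 dummy goods d_1,…,d_{ℓ+1}; agents are V ∪ E ∪ S ∪ W where S = {s_1,…,s_{ℓ+1}} and W = {w_{ij} : i ∈ [n], j ∈ [ℓ+1]}; in H, each edge-agent e = (u,v) ∈ E is adjacent to all agents of S and to the vertex-agents u and v; each vertex-agent v_i is adjacent to all agents w_{ij}, j ∈ [ℓ+1]; and for each i ∈ [n] the set {w_{i1},…,w_{i(ℓ+1)}} induces a clique in H. Valuations (additive 0/1): all agents value all popular goods; all agents of V additionally value all specialized goods; agent s_i additionally values d_i for each i ∈ [ℓ+1]; all other values are 0. Then G contains a clique on k vertices if and only if the constructed instance admits an allocation that is complete, non-wasteful, and graph-envy-free with respect to H. -/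

import Mathlib

namespace CliqueGoodsReduction

/-- Agents of the reduced instance: a vertex agent for each vertex of `G`, an
edge agent for each edge of `G`, the agents `s_1, …, s_{ℓ+1}` and the agents
`w_{ij}` for `i ∈ [n]`, `j ∈ [ℓ+1]`. -/
inductive Agent (n m ℓ : ℕ) where
  | vert (i : Fin n)
  | edg (t : Fin m)
  | sag (i : Fin (ℓ + 1))
  | wag (i : Fin n) (j : Fin (ℓ + 1))
deriving DecidableEq

/-- Goods of the reduced instance: `ℓ` popular goods, `k` specialized goods and
`ℓ + 1` dummy goods. -/
inductive Good (k ℓ : ℕ) where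
  | pop (i : Fin ℓ)
  | spec (i : Fin k)
  | dum (i : Fin (ℓ + 1))
deriving DecidableEq

/-- The social network `H`: each edge agent `e_t = (u,v)` is adjacent to all of
`S` and to the vertex agents `u` and `v`; each vertex agent `v_i` is adjacent
to all `w_{ij}`; and `{w_{i1}, …, w_{i(ℓ+1)}}` induces a clique for each `i`.
Here `ep t` gives the pair of endpoints of the edge `e_t`. -/
def H (n m ℓ : ℕ) (ep : Fin m → Fin n × Fin n) : SimpleGraph (Agent n m ℓ) :=
  SimpleGraph.fromRel (fun a b =>
    match a, b with
    | .edg _, .sag _ => True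
    | .edg t, .vert p => p = (ep t).1 ∨ p = (ep t).2
    | .vert i, .wag i' _ => i = i'
    | .wag i _, .wag i' _ => i = i'
    | _, _ => False)

/-- Additive 0/1 valuations: all agents value all popular goods; vertex agents
additionally value all specialized goods; `s_i` additionally values the dummy
good `d_i`; all other values are 0. -/
def val (n m k ℓ : ℕ) : Agent n m ℓ → Good k ℓ → ℕ
  | _, .pop _ => 1
  | .vert _, .spec _ => 1
  | .sag i, .dum j => if i = j then 1 else 0
  | _, _ => 0

private def alloc {n m k ℓ : ℕ} (T : Finset (Fin n)) (E : Finset (Fin m))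
    (eT : {x // x ∈ T} ≃ Fin k) (eE : {x // x ∈ E} ≃ Fin ℓ) :
    Agent n m ℓ → Finset (Good k ℓ)
  | .vert i => if h : i ∈ T then {.spec (eT ⟨i, h⟩)} else ∅
  | .edg t => if h : t ∈ E then {.pop (eE ⟨t, h⟩)} else ∅
  | .sag i => {.dum i}
  | .wag _ _ => ∅

set_option maxHeartbeats 2000000 in
private theorem fwd (n m k ℓ : ℕ) (hℓ : ℓ = k.choose 2)
    (G : SimpleGraph (Fin n)) (ep : Fin m → Fin n × Fin n)
    (hep : ∀ t : Fin m, G.Adj (ep t).1 (ep t).2)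
    (hsurj : ∀ x y : Fin n, G.Adj x y → ∃ t : Fin m, ep t = (x, y) ∨ ep t = (y, x))
    (hinj : ∀ t t' : Fin m,
      (ep t = ep t' ∨ ep t = ((ep t').2, (ep t').1)) → t = t')
    (T : Finset (Fin n)) (hTcard : T.card = k) (hTclq : G.IsClique (T : Set (Fin n))) :
    (∃ π : Agent n m ℓ → Finset (Good k ℓ),
          (∀ a b : Agent n m ℓ, a ≠ b → Disjoint (π a) (π b)) ∧
          (∀ g : Good k ℓ, ∃ a : Agent n m ℓ, g ∈ π a) ∧
          (∀ a : Agent n m ℓ, ∀ g ∈ π a, val n m k ℓ a g = 1) ∧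
          (∀ a b : Agent n m ℓ, (H n m ℓ ep).Adj a b →
            ∑ g ∈ π b, val n m k ℓ a g ≤ ∑ g ∈ π a, val n m k ℓ a g)) := by
  classical
  have hE : ∀ t : Fin m, t ∈ Finset.univ.filter (fun t => (ep t).1 ∈ T ∧ (ep t).2 ∈ T) ↔
      ((ep t).1 ∈ T ∧ (ep t).2 ∈ T) := by simp
  set E : Finset (Fin m) := Finset.univ.filter (fun t => (ep t).1 ∈ T ∧ (ep t).2 ∈ T) with hEdef
  clear_value E
  have himg : E.image (fun t => s((ep t).1, (ep t).2)) = T.offDiag.image (Function.uncurry Sym2.mk) := by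
    ext z
    simp only [Finset.mem_image, Finset.mem_offDiag]
    constructor
    · rintro ⟨t, ht, rfl⟩
      obtain ⟨h1, h2⟩ := (hE t).mp ht
      exact ⟨ep t, ⟨h1, h2, (hep t).ne⟩, rfl⟩
    · rintro ⟨p, ⟨hp1, hp2, hne⟩, rfl⟩
      obtain ⟨t, ht | ht⟩ := hsurj p.1 p.2 (hTclq hp1 hp2 hne)
      · exact ⟨t, (hE t).mpr (by rw [ht]; exact ⟨hp1, hp2⟩), by rw [ht]; rfl⟩
      · refine ⟨t, (hE t).mpr (by rw [ht]; exact ⟨hp2, hp1⟩), ?_⟩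
        rw [ht]
        exact Sym2.eq_swap
  have hEcard : E.card = ℓ := by
    rw [← Finset.card_image_of_injOn (f := fun t => s((ep t).1, (ep t).2))
      (fun t _ t' _ h => hinj t t' (by simpa [Prod.ext_iff] using Sym2.mk_eq_mk_iff.mp h)),
      himg, Sym2.card_image_offDiag, hTcard, hℓ]
  have eT : {x // x ∈ T} ≃ Fin k := T.equivFinOfCardEq hTcard
  have eE : {x // x ∈ E} ≃ Fin ℓ := E.equivFinOfCardEq hEcard
  clear hEdef
  refine ⟨alloc T E eT eE, ?_, ?_, ?_, ?_⟩
  · rintro (i | t | i | ⟨i, j⟩) (i' | t' | i' | ⟨i', j'⟩) hab <;>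
      simp only [alloc] <;>
      first
      | (split_ifs <;> simp_all [Finset.disjoint_singleton] <;> try exact fun h => hab h.symm)
      | (simp_all [Finset.disjoint_singleton] <;> try exact fun h => hab h.symm)
  · intro g
    rcases g with j | c | i
    · exact ⟨.edg (eE.symm j).1, by simp [alloc, (eE.symm j).2]⟩
    · exact ⟨.vert (eT.symm c).1, by simp [alloc, (eT.symm c).2]⟩
    · exact ⟨.sag i, by simp [alloc]⟩
  · rintro (i | t | i | ⟨i, j⟩) g hg <;> simp only [alloc] at hg <;>
      first
      | (split_ifs at hg <;> simp_all [val])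
      | simp_all [val]
  · intro a b hadj
    rw [H, SimpleGraph.fromRel_adj] at hadj
    obtain ⟨hne, hrel⟩ := hadj
    rcases a with i | t | i | ⟨i, j⟩ <;> rcases b with i' | t' | i' | ⟨i', j'⟩ <;>
      simp only [alloc] <;> simp only [] at hrel
    -- vert, vert
    · exact absurd hrel (by simp)
    -- vert, edg
    · by_cases ht : t' ∈ E
      · have hiT : i ∈ T := by
          obtain ⟨h1, h2⟩ := (hE t').mp ht
          rcases hrel with h | h | h
          · exact h.elim
          · rw [h]; exact h1
          · rw [h]; exact h2
        simp [ht, hiT, val]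
      · simp [ht]
    -- vert, sag
    · exact absurd hrel (by simp)
    -- vert, wag
    · split_ifs <;> simp [val]
    -- edg, vert
    · split_ifs <;> simp [val] <;> split_ifs <;> simp [val]
    -- edg, edg
    · exact absurd hrel (by simp)
    -- edg, sag
    · split_ifs <;> simp [val]
    -- edg, wag
    · exact absurd hrel (by simp)
    -- sag, vert
    · exact absurd hrel (by simp)
    -- sag, edg
    · split_ifs <;> simp [val]
    -- sag, sag
    · exact absurd hrel (by simp)
    -- sag, wag
    · exact absurd hrel (by simp)
    -- wag, vert
    · split_ifs <;> simp [val]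
    -- wag, edg
    · exact absurd hrel (by simp)
    -- wag, sag
    · exact absurd hrel (by simp)
    -- wag, wag
    · simp

set_option maxHeartbeats 2000000 in
private theorem bwd (n m k ℓ : ℕ) (hℓ : ℓ = k.choose 2) (hm : ℓ ≤ m)
    (G : SimpleGraph (Fin n)) (ep : Fin m → Fin n × Fin n)
    (hep : ∀ t : Fin m, G.Adj (ep t).1 (ep t).2)
    (hinj : ∀ t t' : Fin m,
      (ep t = ep t' ∨ ep t = ((ep t').2, (ep t').1)) → t = t')
    (π : Agent n m ℓ → Finset (Good k ℓ))
    (hdisj : ∀ a b : Agent n m ℓ, a ≠ b → Disjoint (π a) (π b))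
    (hcomp : ∀ g : Good k ℓ, ∃ a : Agent n m ℓ, g ∈ π a)
    (hnw : ∀ a : Agent n m ℓ, ∀ g ∈ π a, val n m k ℓ a g = 1)
    (hef : ∀ a b : Agent n m ℓ, (H n m ℓ ep).Adj a b →
      ∑ g ∈ π b, val n m k ℓ a g ≤ ∑ g ∈ π a, val n m k ℓ a g) :
    ∃ T : Finset (Fin n), T.card = k ∧ G.IsClique (T : Set (Fin n)) := by
  classical
  -- adjacency helpers
  have adjES : ∀ (t : Fin m) (i : Fin (ℓ+1)), (H n m ℓ ep).Adj (.edg t) (.sag i) := by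
    intro t i
    rw [H, SimpleGraph.fromRel_adj]
    exact ⟨by simp, Or.inl trivial⟩
  have adjSE : ∀ (i : Fin (ℓ+1)) (t : Fin m), (H n m ℓ ep).Adj (.sag i) (.edg t) :=
    fun i t => (adjES t i).symm
  have adjVE : ∀ (t : Fin m) (p : Fin n), (p = (ep t).1 ∨ p = (ep t).2) →
      (H n m ℓ ep).Adj (.vert p) (.edg t) := by
    intro t p hp
    rw [H, SimpleGraph.fromRel_adj]
    exact ⟨by simp, Or.inr hp⟩
  have adjWW : ∀ (i : Fin n) (j j' : Fin (ℓ+1)), j ≠ j' →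
      (H n m ℓ ep).Adj (.wag i j) (.wag i j') := by
    intro i j j' hjj
    rw [H, SimpleGraph.fromRel_adj]
    exact ⟨by simp [hjj], Or.inl rfl⟩
  have adjWV : ∀ (i : Fin n) (j : Fin (ℓ+1)), (H n m ℓ ep).Adj (.wag i j) (.vert i) := by
    intro i j
    rw [H, SimpleGraph.fromRel_adj]
    exact ⟨by simp, Or.inr rfl⟩
  -- non-wastefulness characterizations
  have nwE : ∀ (t : Fin m), ∀ g ∈ π (.edg t), ∃ j, g = Good.pop j := by
    intro t g hg
    have h := hnw _ _ hg
    rcases g with j | c | i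
    · exact ⟨j, rfl⟩
    · simp [val] at h
    · simp [val] at h
  have nwW : ∀ (i : Fin n) (j : Fin (ℓ+1)), ∀ g ∈ π (.wag i j), ∃ p, g = Good.pop p := by
    intro i j g hg
    have h := hnw _ _ hg
    rcases g with p | c | i'
    · exact ⟨p, rfl⟩
    · simp [val] at h
    · simp [val] at h
  have nwS : ∀ (i : Fin (ℓ+1)), ∀ g ∈ π (.sag i), (∃ p, g = Good.pop p) ∨ g = Good.dum i := by
    intro i g hg
    have h := hnw _ _ hg
    rcases g with p | c | i'
    · exact Or.inl ⟨p, rfl⟩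
    · simp [val] at h
    · simp [val] at h
      exact Or.inr (by rw [h])
  have nwV : ∀ (i : Fin n), ∀ g ∈ π (.vert i), (∃ p, g = Good.pop p) ∨ ∃ c, g = Good.spec c := by
    intro i g hg
    rcases g with p | c | i'
    · exact Or.inl ⟨p, rfl⟩
    · exact Or.inr ⟨c, rfl⟩
    · have h := hnw _ _ hg
      simp [val] at h
  -- F1 : each dummy good belongs to its s-agent
  have hdum : ∀ i : Fin (ℓ+1), Good.dum i ∈ π (.sag i) := by
    intro i
    obtain ⟨a, ha⟩ := hcomp (.dum i)
    have h := hnw _ _ ha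
    rcases a with v | t | i' | ⟨i', j'⟩
    · simp [val] at h
    · simp [val] at h
    · simp [val] at h
      subst h
      exact ha
    · simp [val] at h
  -- F2 : some s-agent holds no popular good
  obtain ⟨i0, hi0⟩ : ∃ i0 : Fin (ℓ+1), ∀ p : Fin ℓ, Good.pop p ∉ π (.sag i0) := by
    by_contra hcon
    push_neg at hcon
    choose f hf using hcon
    have hfinj : Function.Injective f := by
      intro i i' hii
      by_contra hne
      exact Finset.disjoint_left.mp (hdisj (.sag i) (.sag i') (by simp [hne]))
        (hf i) (hii ▸ hf i')
    have := Fintype.card_le_of_injective f hfinj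
    simp at this
  -- F3 : the bundle of s_{i0} has total value 1 for s_{i0}
  have hs0 : ∑ g ∈ π (.sag i0), val n m k ℓ (.sag i0) g ≤ 1 := by
    have hsub : π (.sag i0) ⊆ {Good.dum i0} := by
      intro g hg
      rcases nwS i0 g hg with ⟨p, rfl⟩ | rfl
      · exact absurd hg (hi0 p)
      · exact Finset.mem_singleton_self _
    calc ∑ g ∈ π (.sag i0), val n m k ℓ (.sag i0) g
        ≤ ∑ g ∈ ({Good.dum i0} : Finset (Good k ℓ)), val n m k ℓ (.sag i0) g :=
          Finset.sum_le_sum_of_subset hsub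
      _ = 1 := by simp [val]
  -- F4 : every edge agent holds at most one good
  have hcard1 : ∀ t : Fin m, (π (.edg t)).card ≤ 1 := by
    intro t
    have h := hef (.sag i0) (.edg t) (adjSE i0 t)
    have hval : ∀ g ∈ π (.edg t), val n m k ℓ (.sag i0) g = 1 := by
      intro g hg
      obtain ⟨j, rfl⟩ := nwE t g hg
      rfl
    rw [Finset.sum_congr rfl hval, Finset.sum_const, smul_eq_mul, mul_one] at h
    exact le_trans h hs0
  -- F5 : w-agents hold nothing
  have hwempty : ∀ (i : Fin n) (j : Fin (ℓ+1)), π (.wag i j) = ∅ := by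
    intro i
    obtain ⟨j0, hj0⟩ : ∃ j0, π (.wag i j0) = ∅ := by
      by_contra hcon
      push_neg at hcon
      have hne : ∀ j, ∃ p, Good.pop p ∈ π (.wag i j) := by
        intro j
        obtain ⟨g, hg⟩ := hcon j
        obtain ⟨p, rfl⟩ := nwW i j g hg
        exact ⟨p, hg⟩
      choose f hf using hne
      have hfinj : Function.Injective f := by
        intro j j' hjj
        by_contra hne'
        exact Finset.disjoint_left.mp (hdisj (.wag i j) (.wag i j') (by simp [hne']))
          (hf j) (hjj ▸ hf j')
      have := Fintype.card_le_of_injective f hfinj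
      simp at this
    intro j
    by_cases hjj : j = j0
    · rw [hjj]; exact hj0
    · have h := hef (.wag i j0) (.wag i j) (adjWW i j0 j (Ne.symm hjj))
      rw [hj0, Finset.sum_empty] at h
      rw [Finset.eq_empty_iff_forall_notMem]
      intro g hg
      obtain ⟨p, rfl⟩ := nwW i j g hg
      have h1 : val n m k ℓ (.wag i j0) (Good.pop p) ≤
          ∑ g ∈ π (.wag i j), val n m k ℓ (.wag i j0) g :=
        Finset.single_le_sum (fun _ _ => Nat.zero_le _) hg
      have h2 : (1:ℕ) ≤ 0 := le_trans h1 h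
      omega
  -- F6 : vertex agents hold no popular goods
  have hvnopop : ∀ (i : Fin n) (p : Fin ℓ), Good.pop p ∉ π (.vert i) := by
    intro i p hp
    have h := hef (.wag i ⟨0, Nat.succ_pos ℓ⟩) (.vert i) (adjWV i _)
    rw [hwempty i _, Finset.sum_empty] at h
    have h1 : val n m k ℓ (.wag i ⟨0, Nat.succ_pos ℓ⟩) (Good.pop p) ≤
        ∑ g ∈ π (.vert i), val n m k ℓ (.wag i ⟨0, Nat.succ_pos ℓ⟩) g :=
      Finset.single_le_sum (fun _ _ => Nat.zero_le _) hp
    have h2 : (1:ℕ) ≤ 0 := le_trans h1 h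
    omega
  have hvspec : ∀ (i : Fin n), ∀ g ∈ π (.vert i), ∃ c, g = Good.spec c := by
    intro i g hg
    rcases nwV i g hg with ⟨p, rfl⟩ | hc
    · exact absurd hg (hvnopop i p)
    · exact hc
  -- F7 : s-agents hold no popular goods
  have hsnopop : ∀ (i : Fin (ℓ+1)) (p : Fin ℓ), Good.pop p ∉ π (.sag i) := by
    intro i p hp
    have hedge : ∀ t : Fin m, ∃ q, Good.pop q ∈ π (.edg t) := by
      intro t
      have h := hef (.edg t) (.sag i) (adjES t i)
      have h1 : val n m k ℓ (.edg t) (Good.pop p) ≤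
          ∑ g ∈ π (.sag i), val n m k ℓ (.edg t) g :=
        Finset.single_le_sum (fun _ _ => Nat.zero_le _) hp
      simp [val] at h1
      have h2 : 1 ≤ ∑ g ∈ π (.edg t), val n m k ℓ (.edg t) g := le_trans h1 h
      obtain ⟨g, hg⟩ : (π (.edg t)).Nonempty := by
        by_contra hne
        rw [Finset.not_nonempty_iff_eq_empty] at hne
        rw [hne, Finset.sum_empty] at h2
        omega
      obtain ⟨q, rfl⟩ := nwE t g hg
      exact ⟨q, hg⟩
    choose f hf using hedge
    have hfne : ∀ t, f t ≠ p := by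
      intro t ht
      exact Finset.disjoint_left.mp (hdisj (.edg t) (.sag i) (by simp)) (hf t) (ht ▸ hp)
    have hfinj : Function.Injective f := by
      intro t t' htt
      by_contra hne'
      exact Finset.disjoint_left.mp (hdisj (.edg t) (.edg t') (by simp [hne']))
        (hf t) (htt ▸ hf t')
    have hcard := Finset.card_le_card_of_injOn (s := (Finset.univ : Finset (Fin m))) f
      (fun t _ => Finset.mem_erase.mpr ⟨hfne t, Finset.mem_univ _⟩)
      (fun a _ b _ h => hfinj h)
    rw [Finset.card_erase_of_mem (Finset.mem_univ _)] at hcard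
    simp at hcard
    have hp0 : 0 < ℓ := p.pos
    omega
  -- F8 : every popular good is held by an edge agent
  have hpope : ∀ j : Fin ℓ, ∃ t : Fin m, Good.pop j ∈ π (.edg t) := by
    intro j
    obtain ⟨a, ha⟩ := hcomp (.pop j)
    rcases a with v | t | i | ⟨i, j'⟩
    · exact absurd ha (hvnopop v j)
    · exact ⟨t, ha⟩
    · exact absurd ha (hsnopop i j)
    · rw [hwempty i j'] at ha
      exact absurd ha (Finset.notMem_empty _)
  choose tmap htmap using hpope
  have htinj : Function.Injective tmap := by
    intro j j' hjj
    have := Finset.card_le_one.mp (hcard1 (tmap j)) _ (htmap j) _ (hjj ▸ htmap j')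
    exact Good.pop.inj this
  -- the clique candidate
  set T : Finset (Fin n) :=
    Finset.univ.filter (fun v => ∃ c, Good.spec c ∈ π (.vert v)) with hT
  have hTle : T.card ≤ k := by
    have hex : ∀ v : {x // x ∈ T}, ∃ c, Good.spec c ∈ π (.vert v.1) := by
      intro v
      exact (Finset.mem_filter.mp v.2).2
    choose cfun hc using hex
    have hcinj : Function.Injective cfun := by
      intro v v' h
      by_contra hne
      have hvne : (Agent.vert v.1 : Agent n m ℓ) ≠ Agent.vert v'.1 := by
        simp only [ne_eq, Agent.vert.injEq]
        exact fun hh => hne (Subtype.ext hh)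
      exact Finset.disjoint_left.mp (hdisj _ _ hvne) (hc v) (h ▸ hc v')
    calc T.card = Fintype.card {x // x ∈ T} := (Fintype.card_coe T).symm
      _ ≤ Fintype.card (Fin k) := Fintype.card_le_of_injective cfun hcinj
      _ = k := Fintype.card_fin k
  -- endpoints of popular edges are in T
  have hend : ∀ (p : Fin n) (t : Fin m), (p = (ep t).1 ∨ p = (ep t).2) →
      (∃ j : Fin ℓ, Good.pop j ∈ π (.edg t)) → p ∈ T := by
    rintro p t hpt ⟨j, hj⟩
    have h := hef (.vert p) (.edg t) (adjVE t p hpt)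
    have h1 : val n m k ℓ (.vert p) (Good.pop j) ≤
        ∑ g ∈ π (.edg t), val n m k ℓ (.vert p) g :=
      Finset.single_le_sum (fun _ _ => Nat.zero_le _) hj
    simp [val] at h1
    have h2 : 1 ≤ ∑ g ∈ π (.vert p), val n m k ℓ (.vert p) g := le_trans h1 h
    obtain ⟨g, hg⟩ : (π (.vert p)).Nonempty := by
      by_contra hne
      rw [Finset.not_nonempty_iff_eq_empty] at hne
      rw [hne, Finset.sum_empty] at h2
      omega
    obtain ⟨c, rfl⟩ := hvspec p g hg
    rw [hT]
    exact Finset.mem_filter.mpr ⟨Finset.mem_univ _, c, hg⟩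
  -- the injective map into pairs over T
  set ψ : Fin ℓ → Sym2 (Fin n) := fun j => s((ep (tmap j)).1, (ep (tmap j)).2) with hψ
  have hψinj : Function.Injective ψ := by
    intro j j' h
    exact htinj (hinj _ _ (Sym2.mk_eq_mk_iff.mp h))
  set S : Finset (Sym2 (Fin n)) := Finset.univ.image ψ with hS
  set D : Finset (Sym2 (Fin n)) := T.offDiag.image (Function.uncurry Sym2.mk) with hD
  have hSD : S ⊆ D := by
    intro z hz
    obtain ⟨j, _, rfl⟩ := Finset.mem_image.mp hz
    refine Finset.mem_image.mpr ⟨ep (tmap j), Finset.mem_offDiag.mpr ?_, rfl⟩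
    exact ⟨hend _ _ (Or.inl rfl) ⟨j, htmap j⟩, hend _ _ (Or.inr rfl) ⟨j, htmap j⟩,
      (hep (tmap j)).ne⟩
  have hScard : S.card = ℓ := by
    rw [hS, Finset.card_image_of_injective _ hψinj, Finset.card_univ, Fintype.card_fin]
  have hDcard : D.card = T.card.choose 2 := Sym2.card_image_offDiag T
  have hℓle : ℓ ≤ T.card.choose 2 := by
    rw [← hDcard, ← hScard]
    exact Finset.card_le_card hSD
  have hTk : T.card = k := by
    refine le_antisymm hTle ?_
    by_contra hlt
    push_neg at hlt
    have hk1 : 1 ≤ k := lt_of_le_of_lt (Nat.zero_le _) hlt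
    have hTne : 1 ≤ T.card := by
      obtain ⟨a, ha⟩ := hcomp (.spec ⟨0, hk1⟩)
      have hv := hnw a _ ha
      rcases a with v | t | i | ⟨i, j'⟩
      · refine Finset.card_pos.mpr ⟨v, ?_⟩
        rw [hT]
        exact Finset.mem_filter.mpr ⟨Finset.mem_univ _, _, ha⟩
      · simp [val] at hv
      · simp [val] at hv
      · simp [val] at hv
    rcases Nat.lt_or_ge k 2 with hk2 | hk2
    · omega
    · have h1 : T.card ≤ k - 1 := by omega
      have h2 : T.card.choose 2 ≤ (k-1).choose 2 := Nat.choose_le_choose 2 h1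
      have h3 : k.choose 2 = (k-1).choose 1 + (k-1).choose 2 := by
        conv_lhs => rw [show k = (k-1)+1 by omega]
        exact Nat.choose_succ_succ _ 1
      rw [Nat.choose_one_right] at h3
      omega
  have hSeq : S = D := by
    refine Finset.eq_of_subset_of_card_le hSD ?_
    rw [hDcard, hTk, hScard, hℓ]
  refine ⟨T, hTk, ?_⟩
  intro x hx y hy hxy
  have hmem : s((x, y).1, (x, y).2) ∈ D := by
    rw [hD]
    exact Finset.mem_image.mpr ⟨(x, y),
      Finset.mem_offDiag.mpr ⟨Finset.mem_coe.mp hx, Finset.mem_coe.mp hy, hxy⟩, rfl⟩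
  rw [← hSeq] at hmem
  obtain ⟨j, _, hj⟩ := Finset.mem_image.mp hmem
  rcases Sym2.mk_eq_mk_iff.mp hj with h | h
  · have := hep (tmap j)
    rw [h] at this
    exact this
  · have := hep (tmap j)
    rw [h] at this
    exact this.symm

/-- With `ℓ = C(k,2)` and `m ≥ ℓ`, the graph `G` (whose edges are
enumerated by `ep`) contains a clique on `k` vertices iff the constructed
instance admits a complete, non-wasteful allocation that is graph-envy-free
w.r.t. `H`. -/
theorem clique_iff_eef_allocation
    (n m k ℓ : ℕ) (hℓ : ℓ = k.choose 2) (hm : ℓ ≤ m)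
    (G : SimpleGraph (Fin n)) (ep : Fin m → Fin n × Fin n)
    (hep : ∀ t : Fin m, G.Adj (ep t).1 (ep t).2)
    (hsurj : ∀ x y : Fin n, G.Adj x y → ∃ t : Fin m, ep t = (x, y) ∨ ep t = (y, x))
    (hinj : ∀ t t' : Fin m,
      (ep t = ep t' ∨ ep t = ((ep t').2, (ep t').1)) → t = t') :
    (∃ T : Finset (Fin n), T.card = k ∧ G.IsClique (T : Set (Fin n)))
      ↔ (∃ π : Agent n m ℓ → Finset (Good k ℓ),
          (∀ a b : Agent n m ℓ, a ≠ b → Disjoint (π a) (π b)) ∧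
          (∀ g : Good k ℓ, ∃ a : Agent n m ℓ, g ∈ π a) ∧
          (∀ a : Agent n m ℓ, ∀ g ∈ π a, val n m k ℓ a g = 1) ∧
          (∀ a b : Agent n m ℓ, (H n m ℓ ep).Adj a b →
            ∑ g ∈ π b, val n m k ℓ a g ≤ ∑ g ∈ π a, val n m k ℓ a g)) := by
  constructor
  · rintro ⟨T, hTcard, hTclq⟩
    exact fwd n m k ℓ hℓ G ep hep hsurj hinj T hTcard hTclq
  · rintro ⟨π, hdisj, hcomp, hnw, hef⟩
    exact bwd n m k ℓ hℓ hm G ep hep hinj π hdisj hcomp hnw hef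

end CliqueGoodsReduction
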